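/- arXiv:0810.4015 — 3 statements merged into one kernel-verified Lean document; each statement's English description precedes it below -/
import Mathlib

section
/- Let k be even and l < k with gcd(l,k)=1. Let M_0, M_1, M_3 denote the number of a in GF(2^k)* for which P_a(x) = x^{2^l+1}+x+a has exactly 0, 1, 3 zeros in GF(2^k) respectively. Then M_0 = (2^k-1)/3, M_1 = 2^{k-1}, and M_3 = (2^{k-1}-2)/3. -/
/-!
Write `Q = 2 ^ l`, `P(x) = x ^ (Q + 1) + x` (`bluher l`) and `N(a)` for the number of solutions of
`P(x) = a`.
For `d * e = 1`, `P(x + d) + P(x) = d ^ (Q + 1) * (L_x(e) + 1)` with the additive map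
`L_x(e) = (x ^ Q + 1) * e ^ Q + x * e`. Since `gcd(2 ^ l - 1, 2 ^ k - 1) = 2 ^ gcd(l, k) - 1 = 1`,
`e ↦ e ^ (Q - 1)` is bijective, so every `e ↦ a * e ^ Q + b * e` with `a, b ≠ 0` has a kernel of
size 2. Thus the zeros of `P_a` other than a given one `x₀` solve an affine equation with 0 or 2
solutions, and `N(a) ∈ {0, 1, 3}` for `a ≠ 0`.

Counting pairs `P(x + d) = P(x)` gives `∑ N(a)² = 2 ^ (k + 1) - 2`: for `d ≠ 0` the substitution
`x = d * y` gives `y ^ Q + y = 1 + d⁻¹ ^ Q`, whose right-hand side runs over `F` with `d`, the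
fibre over `1` (of size 2, missed by `d = 0`) being nonempty because `k` is even: a primitive cube
root of unity `ω` has `ω ^ Q + ω = ω² + ω = 1` as `l` is odd. With `∑ N(a) = 2 ^ k` and
`N(0) = 2` this gives three linear equations for `M₀`, `M₁`, `M₃`.
-/

open Finset

section Fiber

variable {α β : Type*} [Fintype α] [DecidableEq β]

theorem sum_card_fiber_sq [Fintype β] (f : α → β) :
    ∑ b, #{a | f a = b} ^ 2 = ∑ a, #{a' | f a' = f a} := by
  rw [← sum_fiberwise univ f fun a => #{a' | f a' = f a}]
  refine sum_congr rfl fun b _ => ?_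
  rw [sum_congr rfl fun a ha => by rw [(mem_filter.mp ha).2], sum_const, smul_eq_mul, sq]

theorem sum_card_fiber_eq_sum_card_add [AddGroup α] [DecidableEq α] (f : α → β) :
    ∑ a, #{a' | f a' = f a} = ∑ d, #{a | f (a + d) = f a} := by
  have hshift (a : α) : #{a' | f a' = f a} = #{d | f (a + d) = f a} := by
    refine card_bij' (fun a' _ => -a + a') (fun d _ => a + d) ?_ ?_ ?_ ?_ <;> simp
  simp only [hshift, card_filter]
  exact sum_comm

theorem card_fiber_eq_zero_or_eq_card_ker [AddGroup α] [AddMonoid β] (f : α →+ β) (c : β) :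
    #{a | f a = c} = 0 ∨ #{a | f a = c} = #{a | f a = 0} := by
  by_cases hc : c ∈ Set.range f
  · exact Or.inr (AddMonoidHom.card_fiber_eq_of_mem_range f hc ⟨0, map_zero f⟩)
  · exact Or.inl (card_eq_zero.mpr (filter_eq_empty_iff.mpr fun a _ ha => hc ⟨a, ha⟩))

end Fiber

theorem sum_comp_eq_sum_card_filter_mul {α : Type*} {s : Finset α} {t : Finset ℕ} {N : α → ℕ}
    (h : ∀ a ∈ s, N a ∈ t) (φ : ℕ → ℕ) :
    ∑ a ∈ s, φ (N a) = ∑ i ∈ t, #{a ∈ s | N a = i} * φ i := by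
  rw [← sum_fiberwise_of_maps_to h]
  refine sum_congr rfl fun i _ => ?_
  rw [sum_congr rfl fun a ha => by rw [(mem_filter.mp ha).2], sum_const, smul_eq_mul]

theorem pow_bijective_of_coprime_card_sub_one {F : Type*} [Field F] [Fintype F] {n : ℕ} (hn : n ≠ 0)
    (h : n.Coprime (Fintype.card F - 1)) : Function.Bijective fun x : F => x ^ n := by
  refine Finite.injective_iff_bijective.mp fun x y hxy => ?_
  rcases eq_or_ne y 0 with rfl | hy
  · exact (pow_eq_zero_iff hn).mp (hxy.trans (zero_pow hn))
  have hx : x ≠ 0 := by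
    rintro rfl
    exact hy ((pow_eq_zero_iff hn).mp ((zero_pow hn).symm.trans hxy).symm)
  have hn1 : (x / y) ^ n = 1 := by rw [div_pow, hxy, div_self (pow_ne_zero n hy)]
  have hq1 : (x / y) ^ (Fintype.card F - 1) = 1 :=
    FiniteField.pow_card_sub_one_eq_one _ (div_ne_zero hx hy)
  exact (div_eq_one_iff_eq hy).mp ((pow_eq_one_iff_of_coprime h).mp ⟨hn1, hq1⟩)

section CharTwo

variable {F : Type*} [Field F] [CharP F 2] {l : ℕ}

theorem pow_two_pow_injective (l : ℕ) : Function.Injective fun x : F => x ^ 2 ^ l :=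
  (iterateFrobenius F 2 l).injective

def linearizedBinomial (l : ℕ) (a b : F) : F →+ F where
  toFun e := a * e ^ 2 ^ l + b * e
  map_zero' := by simp
  map_add' x y := by rw [add_pow_char_pow]; ring

theorem linearizedBinomial_apply (a b e : F) :
    linearizedBinomial l a b e = a * e ^ 2 ^ l + b * e := rfl

/-- In characteristic 2 the zeros of the paper's `P_a` are the fibre of `bluher l` over `a`. -/
def bluher (l : ℕ) (x : F) : F := x ^ (2 ^ l + 1) + x

theorem bluher_eq_zero_iff {x : F} : bluher l x = 0 ↔ x = 0 ∨ x = 1 := by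
  have hfac : bluher l x = x * (x ^ 2 ^ l + 1) := by rw [bluher, pow_succ]; ring
  rw [hfac, mul_eq_zero, CharTwo.add_eq_zero, ← one_pow (2 ^ l), (pow_two_pow_injective l).eq_iff,
    one_pow]

theorem bluher_add_add_bluher {d e : F} (hde : d * e = 1) (x : F) :
    bluher l (x + d) + bluher l x =
      d ^ (2 ^ l + 1) * (linearizedBinomial l (x ^ 2 ^ l + 1) x e + 1) := by
  have h2 : (2 : F) = 0 := CharTwo.two_eq_zero
  have hde' : d ^ 2 ^ l * e ^ 2 ^ l = 1 := by rw [← mul_pow, hde, one_pow]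
  rw [bluher, bluher, linearizedBinomial_apply, pow_succ, pow_succ, add_pow_char_pow]
  linear_combination (x ^ 2 ^ l * x + x) * h2 - (x ^ 2 ^ l * d + d) * hde' - x * d ^ 2 ^ l * hde

theorem bluher_add_eq_iff {d : F} (hd : d ≠ 0) (x : F) :
    bluher l (x + d) = bluher l x ↔ linearizedBinomial l (x ^ 2 ^ l + 1) x d⁻¹ = 1 := by
  rw [← CharTwo.add_eq_zero, bluher_add_add_bluher (mul_inv_cancel₀ hd), mul_eq_zero,
    CharTwo.add_eq_zero, or_iff_right (pow_ne_zero _ hd)]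

theorem linearizedBinomial_eq_add (x e : F) :
    linearizedBinomial l (x ^ 2 ^ l + 1) x e = linearizedBinomial l 1 1 (x * e) + e ^ 2 ^ l := by
  simp only [linearizedBinomial_apply, mul_pow]
  ring

end CharTwo

section Count

variable {F : Type*} [Field F] [Fintype F] [DecidableEq F] {l : ℕ}

variable (l) in
def rootCount (a : F) : ℕ := #{x | bluher l x = a}

variable (l) in
theorem sum_rootCount : ∑ a : F, rootCount l a = Fintype.card F :=
  (card_eq_sum_card_fiberwise (by simp)).symm

variable [CharP F 2]

theorem card_ker_linearizedBinomial (hl : l ≠ 0)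
    (hcop : (2 ^ l - 1).Coprime (Fintype.card F - 1)) {a b : F} (ha : a ≠ 0) (hb : b ≠ 0) :
    #{e | linearizedBinomial l a b e = 0} = 2 := by
  set n := 2 ^ l - 1
  have hn : n ≠ 0 := Nat.sub_ne_zero_of_lt (Nat.one_lt_two_pow hl)
  have hbij := pow_bijective_of_coprime_card_sub_one hn hcop
  obtain ⟨e₀, he₀⟩ := hbij.2 (b / a)
  have he₀ne : e₀ ≠ 0 := by
    rintro rfl
    exact div_ne_zero hb ha ((zero_pow hn).symm.trans he₀).symm
  have hker (e : F) : linearizedBinomial l a b e = 0 ↔ e = 0 ∨ e = e₀ := by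
    have hfac : linearizedBinomial l a b e = e * (e ^ n * a + b) := by
      rw [linearizedBinomial_apply, ← Nat.sub_add_cancel (Nat.one_le_two_pow (n := l))]
      ring
    rw [hfac, mul_eq_zero, CharTwo.add_eq_zero, ← eq_div_iff ha, ← he₀, hbij.1.eq_iff]
  have hset : ({e | linearizedBinomial l a b e = 0} : Finset F) = {0, e₀} := by
    ext e
    simp [hker]
  rw [hset, card_pair he₀ne.symm]

theorem rootCount_zero : rootCount l (0 : F) = 2 := by
  have hset : ({x | bluher l x = 0} : Finset F) = {0, 1} := by
    ext x
    simp [bluher_eq_zero_iff]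
  rw [rootCount, hset, card_pair zero_ne_one]

theorem rootCount_bluher (x₀ : F) :
    rootCount l (bluher l x₀) = #{e | linearizedBinomial l (x₀ ^ 2 ^ l + 1) x₀ e = 1} + 1 := by
  rw [rootCount,
    ← card_erase_add_one (s := {x | bluher l x = bluher l x₀}) (a := x₀) (by simp)]
  congr 1
  refine card_bij' (fun x _ => (x - x₀)⁻¹) (fun e _ => x₀ + e⁻¹) ?_ ?_ ?_ ?_
  · intro x hx
    rw [mem_erase, mem_filter] at hx
    have hd : x - x₀ ≠ 0 := sub_ne_zero.mpr hx.1
    simpa using (bluher_add_eq_iff hd x₀).mp (by rw [add_sub_cancel]; exact hx.2.2)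
  · intro e he
    have he₀ : e ≠ 0 := by
      rintro rfl
      simp at he
    simpa [he₀, bluher_add_eq_iff (inv_ne_zero he₀)] using he
  · intro x _
    simp
  · intro e _
    simp

theorem rootCount_mem_of_ne_zero (hl : l ≠ 0) (hcop : (2 ^ l - 1).Coprime (Fintype.card F - 1))
    {a : F} (ha : a ≠ 0) : rootCount l a ∈ ({0, 1, 3} : Finset ℕ) := by
  by_cases h : ∃ x₀, bluher l x₀ = a
  · obtain ⟨x₀, rfl⟩ := h
    obtain ⟨hx₀, hx₁⟩ : x₀ ≠ 0 ∧ x₀ ≠ 1 := by simpa [bluher_eq_zero_iff, not_or] using ha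
    have hc : x₀ ^ 2 ^ l + 1 ≠ 0 := by
      rwa [Ne, CharTwo.add_eq_zero, ← one_pow (2 ^ l), (pow_two_pow_injective l).eq_iff]
    have hker := card_ker_linearizedBinomial hl hcop hc hx₀
    rcases card_fiber_eq_zero_or_eq_card_ker (linearizedBinomial l (x₀ ^ 2 ^ l + 1) x₀) 1
      with h | h <;> simp [rootCount_bluher, h, hker]
  · rw [rootCount, card_eq_zero.mpr (filter_eq_empty_iff.mpr fun x _ hx => h ⟨x, hx⟩)]
    simp

theorem sum_rootCount_sq (hl : l ≠ 0) (hcop : (2 ^ l - 1).Coprime (Fintype.card F - 1))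
    (hone : (1 : F) ∈ Set.range (linearizedBinomial l 1 1)) :
    ∑ a : F, rootCount l a ^ 2 + 2 = 2 * Fintype.card F := by
  set ψ := linearizedBinomial l (1 : F) 1
  set c : F → F := fun d => 1 + d⁻¹ ^ 2 ^ l
  have hshift {d : F} (hd : d ≠ 0) :
      #{x | bluher l (x + d) = bluher l x} = #{y | ψ y = c d} := by
    have hiff (x : F) : bluher l (x + d) = bluher l x ↔ ψ (x * d⁻¹) = c d := by
      rw [bluher_add_eq_iff hd, linearizedBinomial_eq_add, CharTwo.add_eq_iff_eq_add]
    rw [filter_congr fun x _ => hiff x]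
    refine card_bij' (fun x _ => x * d⁻¹) (fun y _ => y * d) ?_ ?_ ?_ ?_ <;> simp [hd]
  have hc : Function.Bijective c :=
    (add_right_injective 1).bijective_of_finite.comp
      ((pow_two_pow_injective l).bijective_of_finite.comp inv_involutive.bijective)
  have hsum : ∑ d, #{y | ψ y = c d} = Fintype.card F := by
    rw [hc.sum_comp fun b => #{y | ψ y = b}]
    exact (card_eq_sum_card_fiberwise (by simp)).symm
  have hψ₁ : #{y | ψ y = c 0} = 2 := by
    obtain ⟨w, hw⟩ := hone
    simp only [c, inv_zero, zero_pow (pow_ne_zero l two_ne_zero), add_zero]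
    rw [AddMonoidHom.card_fiber_eq_of_mem_range ψ ⟨w, hw⟩ ⟨0, map_zero ψ⟩]
    exact card_ker_linearizedBinomial hl hcop one_ne_zero one_ne_zero
  calc ∑ a, rootCount l a ^ 2 + 2
      = ∑ d : F, #{x | bluher l (x + d) = bluher l x} + 2 := by
        rw [← sum_card_fiber_eq_sum_card_add (bluher l), ← sum_card_fiber_sq]
        rfl
    _ = Fintype.card F + (∑ d ∈ univ.erase (0 : F), #{y | ψ y = c d} + #{y | ψ y = c 0}) := by
        rw [← add_sum_erase _ _ (mem_univ 0), hψ₁, add_assoc,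
          sum_congr rfl fun d hd => hshift (ne_of_mem_erase hd)]
        simp
    _ = 2 * Fintype.card F := by
        rw [sum_erase_add _ _ (mem_univ 0), hsum, two_mul]

theorem one_mem_range_linearizedBinomial (h3 : 3 ∣ Fintype.card F - 1) (hl : Odd l) :
    (1 : F) ∈ Set.range (linearizedBinomial l 1 1) := by
  obtain ⟨g, hg⟩ := exists_prime_orderOf_dvd_card 3 (G := Fˣ) (by rwa [Fintype.card_units])
  set w : F := ↑g
  have hw₃ : w ^ 3 = 1 := by
    rw [← Units.val_pow_eq_pow_val, ← hg, pow_orderOf_eq_one, Units.val_one]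
  have hw₁ : w ≠ 1 := by
    intro h
    rw [Units.val_eq_one.mp h, orderOf_one] at hg
    exact absurd hg (by norm_num)
  have hroot : w ^ 2 + w + 1 = 0 := by
    have hfac : (w - 1) * (w ^ 2 + w + 1) = 0 := by linear_combination hw₃
    exact (mul_eq_zero.mp hfac).resolve_left (sub_ne_zero.mpr hw₁)
  have hmod : 2 ^ l % 3 = 2 := by
    obtain ⟨m, rfl⟩ := hl
    rw [pow_succ, pow_mul, Nat.mul_mod, Nat.pow_mod]
    norm_num
  have hwQ : w ^ 2 ^ l = w ^ 2 := by
    rw [← Nat.div_add_mod (2 ^ l) 3, pow_add, pow_mul, hw₃, one_pow, one_mul, hmod]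
  refine ⟨w, ?_⟩
  rw [linearizedBinomial_apply, one_mul, one_mul, hwQ, ← CharTwo.add_eq_zero]
  exact hroot

theorem card_filter_rootCount_eq {k : ℕ} (hF : Fintype.card F = 2 ^ k) (hk : k ≠ 0) (hl : l ≠ 0)
    (hcop : (2 ^ l - 1).Coprime (Fintype.card F - 1))
    (hone : (1 : F) ∈ Set.range (linearizedBinomial l 1 1)) :
    #{a : F | a ≠ 0 ∧ rootCount l a = 0} = (2 ^ k - 1) / 3 ∧
    #{a : F | a ≠ 0 ∧ rootCount l a = 1} = 2 ^ (k - 1) ∧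
    #{a : F | a ≠ 0 ∧ rootCount l a = 3} = (2 ^ (k - 1) - 2) / 3 := by
  have hvals (a) (ha : a ∈ univ.erase (0 : F)) : rootCount l a ∈ ({0, 1, 3} : Finset ℕ) :=
    rootCount_mem_of_ne_zero hl hcop (ne_of_mem_erase ha)
  have hM (i : ℕ) :
      #{a : F | a ≠ 0 ∧ rootCount l a = i} = #{a ∈ univ.erase (0 : F) | rootCount l a = i} := by
    congr 1
    ext a
    simp
  have hcard := sum_comp_eq_sum_card_filter_mul hvals fun _ => 1
  have hsum := sum_comp_eq_sum_card_filter_mul hvals id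
  have hsq := sum_comp_eq_sum_card_filter_mul hvals (· ^ 2)
  simp only [sum_const, smul_eq_mul, mul_one, card_erase_of_mem (mem_univ _), card_univ, id]
    at hcard hsum hsq
  rw [sum_insert (by decide), sum_insert (by decide), sum_singleton] at hcard hsum hsq
  have h₁ := sum_rootCount (F := F) l
  have h₂ := sum_rootCount_sq hl hcop hone
  rw [← add_sum_erase _ _ (mem_univ 0), rootCount_zero] at h₁ h₂
  have hk' : 2 ^ k = 2 * 2 ^ (k - 1) := by
    rw [← pow_succ', Nat.sub_add_cancel (Nat.one_le_iff_ne_zero.mpr hk)]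
  simp only [hM]
  omega

end Count

theorem stmt_3_general (k l : ℕ) (hk : Even k) (hgcd : Nat.gcd l k = 1)
    (F : Type*) [Field F] [Fintype F] [DecidableEq F] (hF : Fintype.card F = 2 ^ k) :
    ((Finset.univ.filter (fun a : F => a ≠ 0 ∧
        (Finset.univ.filter (fun x : F => x ^ (2 ^ l + 1) + x + a = 0)).card = 0)).card
        = (2 ^ k - 1) / 3) ∧
    ((Finset.univ.filter (fun a : F => a ≠ 0 ∧
        (Finset.univ.filter (fun x : F => x ^ (2 ^ l + 1) + x + a = 0)).card = 1)).card
        = 2 ^ (k - 1)) ∧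
    ((Finset.univ.filter (fun a : F => a ≠ 0 ∧
        (Finset.univ.filter (fun x : F => x ^ (2 ^ l + 1) + x + a = 0)).card = 3)).card
        = (2 ^ (k - 1) - 2) / 3) := by
  have : CharP F 2 := charP_of_card_eq_prime_pow hF
  have hk₀ : k ≠ 0 := by
    rintro rfl
    exact (Fintype.one_lt_card (α := F)).ne' hF
  have hl : Odd l := Nat.odd_iff.mpr <| Nat.two_dvd_ne_zero.mp fun h2 =>
    absurd (hgcd ▸ Nat.dvd_gcd h2 (even_iff_two_dvd.mp hk)) (by norm_num)
  have hcop : (2 ^ l - 1).Coprime (Fintype.card F - 1) := by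
    rw [hF, Nat.Coprime, Nat.pow_sub_one_gcd_pow_sub_one, hgcd, pow_one]
  have h3 : 3 ∣ Fintype.card F - 1 := by
    obtain ⟨m, rfl⟩ := hk
    simpa [hF, ← two_mul, pow_mul] using Nat.sub_dvd_pow_sub_pow 4 1 m
  have hroots (a : F) : #{x : F | x ^ (2 ^ l + 1) + x + a = 0} = rootCount l a := by
    rw [rootCount]
    congr 1
    exact filter_congr fun x _ => CharTwo.add_eq_zero
  simp only [hroots]
  exact card_filter_rootCount_eq hF hk₀ hl.pos.ne' hcop
    (one_mem_range_linearizedBinomial h3 hl)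

/-- distribution of the number of zeros of `P_a` for even `k`, `gcd(l,k)=1`. -/
theorem stmt_3 (k l : ℕ) (hk : Even k) (hk0 : 0 < k) (hlk : l < k) (hgcd : Nat.gcd l k = 1)
    (F : Type*) [Field F] [Fintype F] [DecidableEq F] (hF : Fintype.card F = 2 ^ k) :
    ((Finset.univ.filter (fun a : F => a ≠ 0 ∧
        (Finset.univ.filter (fun x : F => x ^ (2 ^ l + 1) + x + a = 0)).card = 0)).card
        = (2 ^ k - 1) / 3) ∧
    ((Finset.univ.filter (fun a : F => a ≠ 0 ∧
        (Finset.univ.filter (fun x : F => x ^ (2 ^ l + 1) + x + a = 0)).card = 1)).card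
        = 2 ^ (k - 1)) ∧
    ((Finset.univ.filter (fun a : F => a ≠ 0 ∧
        (Finset.univ.filter (fun x : F => x ^ (2 ^ l + 1) + x + a = 0)).card = 3)).card
        = (2 ^ (k - 1) - 2) / 3) :=
  stmt_3_general k l hk hgcd F hF
end

section
/- Let l < k with gcd(l,k) = d, k = n d with n > 1, and define C_i as C_1=C_2=1, C_{i+2}(x)=C_{i+1}(x)+x^{2^{il}}C_i(x). Then for any u in GF(2^k) and 1 <= i <= n-1: C_{i+2}(u) = C_{i+1}(u)^{2^l} + u^{2^l} C_i(u)^{2^{2l}}. -/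
/-- The sequence `C_1 = C_2 = 1`, `C_{i+2}(x) = C_{i+1}(x) + x^(2^(i*l)) * C_i(x)`
(with `C_0 = 0`), evaluated at `u`. -/
def Cseq (l : ℕ) {F : Type*} [Field F] (u : F) : ℕ → F
  | 0 => 0
  | 1 => 1
  | 2 => 1
  | (i + 3) => Cseq l u (i + 2) + u ^ (2 ^ ((i + 1) * l)) * Cseq l u (i + 1)

/-- `Z_n(x) = C_{n+1}(x) + x * C_{n-1}(x)^(2^l)`, evaluated at `u`. -/
def Zseq (l n : ℕ) {F : Type*} [Field F] (u : F) : F :=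
  Cseq l u (n + 1) + u * (Cseq l u (n - 1)) ^ (2 ^ l)

/-
`C_{i+2}`, `C_{i+1}^(2^l)` and `C_i^(2^(2l))`, viewed as sequences in `i`, all satisfy the same
recurrence `x_{i+2} = x_{i+1} + u^(2^((i+2)l)) x_i`: the first by definition, the other two
because the `2^l`-th power map is a ring homomorphism in characteristic 2 which multiplies the
exponent `2^(il)` by `2^l`. Both sides of the identity therefore satisfy this recurrence, and
they agree for `i = 0, 1`.
-/

def SatisfiesRecurrence {R : Type*} [CommSemiring R] (w x : ℕ → R) : Prop :=
  ∀ i, x (i + 2) = x (i + 1) + w i * x i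

namespace SatisfiesRecurrence

variable {R : Type*} [CommSemiring R] {w x y : ℕ → R}

theorem add (hx : SatisfiesRecurrence w x) (hy : SatisfiesRecurrence w y) :
    SatisfiesRecurrence w (x + y) := fun i => by
  simp only [Pi.add_apply, hx i, hy i]
  ring

theorem const_mul (hx : SatisfiesRecurrence w x) (c : R) :
    SatisfiesRecurrence w (fun i => c * x i) := fun i => by
  simp only [hx i]
  ring

theorem shift (hx : SatisfiesRecurrence w x) (m : ℕ) :
    SatisfiesRecurrence (fun i => w (i + m)) (fun i => x (i + m)) := fun i => by
  simpa only [Nat.add_right_comm] using hx (i + m)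

theorem map {S : Type*} [CommSemiring S] (hx : SatisfiesRecurrence w x) (f : R →+* S) :
    SatisfiesRecurrence (f ∘ w) (f ∘ x) := fun i => by
  simp only [Function.comp_apply, hx i, map_add, map_mul]

theorem eq_of_eq_of_eq (hx : SatisfiesRecurrence w x) (hy : SatisfiesRecurrence w y)
    (h0 : x 0 = y 0) (h1 : x 1 = y 1) : x = y := by
  have h : ∀ i, x i = y i ∧ x (i + 1) = y (i + 1) := by
    intro i
    induction i with
    | zero => exact ⟨h0, h1⟩
    | succ i ih => exact ⟨ih.2, by rw [hx, hy, ih.1, ih.2]⟩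
  exact funext fun i => (h i).1

end SatisfiesRecurrence

section Cseq

variable {F : Type*} [Field F] (l : ℕ) (u : F)

theorem Cseq_add_two (i : ℕ) :
    Cseq l u (i + 2) = Cseq l u (i + 1) + u ^ (2 ^ (i * l)) * Cseq l u i := by
  cases i with
  | zero => simp [Cseq]
  | succ i => rfl

theorem Cseq_satisfiesRecurrence :
    SatisfiesRecurrence (fun i => u ^ (2 ^ (i * l))) (Cseq l u) :=
  Cseq_add_two l u

theorem Cseq_pow_two_pow_satisfiesRecurrence [CharP F 2] (m : ℕ) :
    SatisfiesRecurrence (fun i => u ^ (2 ^ ((i + m) * l))) (fun i => Cseq l u i ^ (2 ^ (m * l))) := by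
  have h := (Cseq_satisfiesRecurrence l u).map (iterateFrobenius F 2 (m * l))
  have hw : (iterateFrobenius F 2 (m * l) ∘ fun i => u ^ (2 ^ (i * l)))
      = fun i => u ^ (2 ^ ((i + m) * l)) := by
    funext i
    rw [Function.comp_apply, iterateFrobenius_def, ← pow_mul, ← pow_add, add_mul]
  rw [hw] at h
  simpa only [Function.comp_def, iterateFrobenius_def] using h

theorem Cseq_add_two_eq_frobenius [CharP F 2] (i : ℕ) :
    Cseq l u (i + 2) = (Cseq l u (i + 1)) ^ (2 ^ l) + u ^ (2 ^ l) * (Cseq l u i) ^ (2 ^ (2 * l)) := by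
  have hshift := (Cseq_satisfiesRecurrence l u).shift 2
  have hfrob1 := (Cseq_pow_two_pow_satisfiesRecurrence l u 1).shift 1
  have hfrob2 := Cseq_pow_two_pow_satisfiesRecurrence l u 2
  simp only [one_mul, Nat.add_assoc] at hfrob1
  have hsum := hfrob1.add (hfrob2.const_mul (u ^ (2 ^ l)))
  have hseq := hshift.eq_of_eq_of_eq hsum (by simp [Cseq]) (by simp [Cseq])
  exact congrFun hseq i

end Cseq

theorem stmt_6_general (k l : ℕ)
    (F : Type*) [Field F] [Fintype F] (hF : Fintype.card F = 2 ^ k)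
    (u : F) (i : ℕ) :
    Cseq l u (i + 2) = (Cseq l u (i + 1)) ^ (2 ^ l) + u ^ (2 ^ l) * (Cseq l u i) ^ (2 ^ (2 * l)) := by
  have : CharP F 2 := charP_of_card_eq_prime_pow hF
  exact Cseq_add_two_eq_frobenius l u i

/-- `C_{i+2}(u) = C_{i+1}(u)^(2^l) + u^(2^l) * C_i(u)^(2^(2l))`. -/
theorem stmt_6 (k l d n : ℕ) (hlk : l < k) (hd : Nat.gcd l k = d) (hk : k = n * d)
    (hn : 1 < n)
    (F : Type*) [Field F] [Fintype F] (hF : Fintype.card F = 2 ^ k)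
    (u : F) (i : ℕ) (hi1 : 1 ≤ i) (hi2 : i ≤ n - 1) :
    Cseq l u (i + 2) = (Cseq l u (i + 1)) ^ (2 ^ l) + u ^ (2 ^ l) * (Cseq l u i) ^ (2 ^ (2 * l)) :=
  stmt_6_general k l F hF u i
end

section
/- Let l < k with gcd(l,k) = d, k = n d, n > 1, and let v be in GF(2^k) \ GF(2^d). Set V = v^{2^{2l}+1} / (v + v^{2^l})^{2^l+1}. Then C_n(V) = (Tr^k_d(v) / (v^{2^l} + v^{2^{2l}})) * prod_{j=2}^{n-1} (v / (v + v^{2^l}))^{2^{jl}}, where C_n is defined by C_1=C_2=1, C_{i+2}(x)=C_{i+1}(x)+x^{2^{il}}C_i(x) and Tr^k_d is the trace from GF(2^k) to GF(2^d). -/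
/-!
Write `t i = v ^ 2 ^ (i * l)` and `w i = t i + t (i + 1)`. Frobenius-conjugating `V` gives
`V ^ 2 ^ (i * l) = t i * t (i + 2) / (w i * w (i + 1))`, and with this the recursion for `C` is
solved by `C (m + 2) = (t 1 + ⋯ + t (m + 2)) / w 1 * ∏_{j=2}^{m+1} t j / w j`: the inductive
step reduces to an identity that holds because `2 = 0`. The `w i` are nonzero because
`v ^ 2 ^ l = v` together with `v ^ 2 ^ k = v` would force `v ^ 2 ^ d = v`. Finally, since
`l / d` is a unit modulo `n = k / d`, the sum `t 1 + ⋯ + t n` runs over the same conjugates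
`v ^ 2 ^ (i * d)` as the relative trace.
-/

open Finset

theorem Function.Periodic.sum_range_mul_of_coprime {M : Type*} [AddCommMonoid M] {f : ℕ → M}
    {n a : ℕ} (hf : Function.Periodic f n) (ha : a.Coprime n) :
    ∑ i ∈ range n, f (a * i) = ∑ i ∈ range n, f i := by
  have hmaps : ∀ i ∈ range n, a * i % n ∈ range n := fun i hi =>
    mem_range.2 (Nat.mod_lt _ (pos_of_ne_zero (by rintro rfl; simp at hi)))
  have hinj : Set.InjOn (fun i => a * i % n) (range n) := fun i hi j hj hij =>
    ((Nat.ModEq.cancel_left_of_coprime (by rwa [Nat.gcd_comm]) hij).eq_of_lt_of_lt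
      (mem_range.1 hi) (mem_range.1 hj))
  have himage : (range n).image (fun i => a * i % n) = range n :=
    eq_of_subset_of_card_le (image_subset_iff.2 hmaps) (card_image_of_injOn hinj).ge
  conv_rhs => rw [← himage, sum_image hinj]
  exact sum_congr rfl fun i _ => (hf.map_mod_nat _).symm

theorem pow_two_pow_mul_pow_two_pow {M : Type*} [Monoid M] (v : M) (l i j : ℕ) :
    (v ^ 2 ^ (j * l)) ^ 2 ^ (i * l) = v ^ 2 ^ ((i + j) * l) := by
  rw [← pow_mul, ← pow_add, add_mul, add_comm]

theorem pow_two_pow_gcd_eq_self {M : Type*} [Monoid M] {x : M} {a b : ℕ}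
    (ha : x ^ 2 ^ a = x) (hb : x ^ 2 ^ b = x) : x ^ 2 ^ a.gcd b = x := by
  have key : ∀ c, Function.IsPeriodicPt (· ^ 2) c x ↔ x ^ 2 ^ c = x := fun c => by
    rw [Function.IsPeriodicPt, Function.IsFixedPt, pow_iterate]
  exact (key _).1 (((key a).2 ha).gcd ((key b).2 hb))

theorem sum_range_pow_two_pow_eq {R : Type*} [CommRing R] {x : R} {k l d n : ℕ}
    (hx : x ^ 2 ^ k = x) (hd : l.gcd k = d) (hk : k = n * d) (hd0 : 0 < d) :
    ∑ i ∈ range n, x ^ 2 ^ ((i + 1) * l) = ∑ i ∈ range n, x ^ 2 ^ (i * d) := by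
  set f : ℕ → R := fun i => x ^ 2 ^ (i * d)
  have hf : Function.Periodic f n := fun i => by
    simp only [f]
    rw [add_mul, ← hk, pow_add, pow_mul', hx]
  obtain ⟨a, rfl⟩ : d ∣ l := hd ▸ l.gcd_dvd_left k
  have ha : a.Coprime n := by
    have := Nat.coprime_div_gcd_div_gcd (m := d * a) (n := k) (by rw [hd]; exact hd0)
    rwa [hd, hk, Nat.mul_div_cancel_left _ hd0, Nat.mul_div_cancel _ hd0] at this
  have ht : ∀ i, x ^ 2 ^ (i * (d * a)) = f (a * i) := fun i => by
    simp only [f]; ring_nf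
  have hshift := sum_range_succ (fun i => f (a * i)) n
  rw [sum_range_succ', show f (a * n) = f (a * 0) by simpa using hf.nat_mul_eq a] at hshift
  simp only [ht]
  rw [← hf.sum_range_mul_of_coprime ha]
  exact add_right_cancel hshift

section CharTwo

variable {F : Type*} [Field F] [CharP F 2]

theorem Cseq_add_two_eq (l : ℕ) {V : F} {t : ℕ → F} (ht : ∀ j, t j + t (j + 1) ≠ 0)
    (hV : ∀ i, V ^ 2 ^ (i * l) = t i * t (i + 2) / ((t i + t (i + 1)) * (t (i + 1) + t (i + 2))))
    (m : ℕ) :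
    Cseq l V (m + 2) = (∑ i ∈ range (m + 2), t (i + 1)) / (t 1 + t 2)
      * ∏ j ∈ range m, t (j + 2) / (t (j + 2) + t (j + 3)) := by
  have h2 : (2 : F) = 0 := CharTwo.two_eq_zero
  induction m using Nat.twoStepInduction with
  | zero => simp [Cseq, sum_range_succ, div_self (ht 1)]
  | one =>
    have hC : Cseq l V 3 = 1 + V ^ 2 ^ (1 * l) * 1 := rfl
    rw [hC, hV 1]
    simp only [sum_range_succ, prod_range_succ]
    have := ht 1; have := ht 2
    field_simp
    linear_combination t 1 * t 3 * h2
  | more m ih₁ ih₂ =>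
    have hC : Cseq l V (m + 4)
        = Cseq l V (m + 3) + V ^ 2 ^ ((m + 2) * l) * Cseq l V (m + 2) := rfl
    set S := ∑ i ∈ range (m + 2), t (i + 1)
    set P := ∏ j ∈ range m, t (j + 2) / (t (j + 2) + t (j + 3))
    have hS₃ : ∑ i ∈ range (m + 3), t (i + 1) = S + t (m + 3) := sum_range_succ _ _
    have hS₄ : ∑ i ∈ range (m + 4), t (i + 1) = S + t (m + 3) + t (m + 4) := by
      rw [sum_range_succ, hS₃]
    have hP₁ : ∏ j ∈ range (m + 1), t (j + 2) / (t (j + 2) + t (j + 3))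
        = P * (t (m + 2) / (t (m + 2) + t (m + 3))) := prod_range_succ _ _
    have hP₂ : ∏ j ∈ range (m + 2), t (j + 2) / (t (j + 2) + t (j + 3))
        = P * (t (m + 2) / (t (m + 2) + t (m + 3))) * (t (m + 3) / (t (m + 3) + t (m + 4))) := by
      rw [prod_range_succ, hP₁]
    rw [hC, ih₁, ih₂, hV, hS₃, hS₄, hP₁, hP₂]
    have := ht 1; have := ht (m + 2); have := ht (m + 3)
    field_simp
    linear_combination t (m + 2) * t (m + 4) * S * P * h2

theorem add_pow_two_pow_mul (v : F) (l i : ℕ) :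
    (v + v ^ 2 ^ l) ^ 2 ^ (i * l) = v ^ 2 ^ (i * l) + v ^ 2 ^ ((i + 1) * l) := by
  rw [add_pow_char_pow, ← pow_mul, ← pow_add, add_mul, one_mul, add_comm l]

theorem pow_two_pow_mul_eq_ratio (v : F) (l i : ℕ) :
    (v ^ (2 ^ (2 * l) + 1) / (v + v ^ 2 ^ l) ^ (2 ^ l + 1)) ^ 2 ^ (i * l)
      = v ^ 2 ^ (i * l) * v ^ 2 ^ ((i + 2) * l)
        / ((v ^ 2 ^ (i * l) + v ^ 2 ^ ((i + 1) * l))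
          * (v ^ 2 ^ ((i + 1) * l) + v ^ 2 ^ ((i + 2) * l))) := by
  have hV : v ^ (2 ^ (2 * l) + 1) / (v + v ^ 2 ^ l) ^ (2 ^ l + 1)
      = v * v ^ 2 ^ (2 * l) / ((v + v ^ 2 ^ l) * (v + v ^ 2 ^ l) ^ 2 ^ (1 * l)) := by
    rw [pow_succ', pow_succ', one_mul]
  rw [hV, div_pow, mul_pow, mul_pow, pow_two_pow_mul_pow_two_pow, pow_two_pow_mul_pow_two_pow,
    add_pow_two_pow_mul, add_pow_two_pow_mul]

end CharTwo

/-- value of `C_n` at `V = v^(2^(2l)+1)/(v+v^(2^l))^(2^l+1)` for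
`v ∈ GF(2^k) \ GF(2^d)`. -/
theorem stmt_8 (k l d n : ℕ) (hlk : l < k) (hd : Nat.gcd l k = d) (hk : k = n * d)
    (hn : 1 < n)
    (F : Type*) [Field F] [Fintype F] (hF : Fintype.card F = 2 ^ k)
    (v : F) (hv : v ^ (2 ^ d) ≠ v) :
    Cseq l (v ^ (2 ^ (2 * l) + 1) / (v + v ^ (2 ^ l)) ^ (2 ^ l + 1)) n
      = ((∑ i ∈ Finset.range n, v ^ (2 ^ (i * d))) / (v ^ (2 ^ l) + v ^ (2 ^ (2 * l))))
          * ∏ j ∈ Finset.Icc 2 (n - 1), (v / (v + v ^ (2 ^ l))) ^ (2 ^ (j * l)) := by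
  have hk0 : k ≠ 0 := by omega
  have : CharP F 2 := ringChar.of_eq (FiniteField.even_card_iff_char_two.2 (by simp [hF]; omega))
  have hfix : ∀ x : F, x ^ 2 ^ k = x := fun x => hF ▸ FiniteField.pow_card x
  have hd0 : 0 < d := Nat.pos_of_ne_zero (by rintro rfl; simp_all)
  have hw : v + v ^ 2 ^ l ≠ 0 := by
    rw [Ne, CharTwo.add_eq_zero]
    exact fun h => hv (hd ▸ pow_two_pow_gcd_eq_self h.symm (hfix v))
  obtain ⟨m, rfl⟩ : ∃ m, n = m + 2 := ⟨n - 2, by omega⟩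
  rw [Cseq_add_two_eq l (t := fun i => v ^ 2 ^ (i * l))
    (fun j => add_pow_two_pow_mul v l j ▸ pow_ne_zero _ hw) (pow_two_pow_mul_eq_ratio v l) m,
    sum_range_pow_two_pow_eq (hfix v) hd hk hd0, ← Ico_add_one_right_eq_Icc,
    prod_Ico_eq_prod_range, show m + 2 - 1 + 1 - 2 = m by omega]
  refine congrArg₂ _ (by rw [one_mul]) (prod_congr rfl fun j _ => ?_)
  rw [div_pow, add_pow_two_pow_mul, add_comm 2 j]
end
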